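/- arXiv:2407.14976 — 2 statements merged into one kernel-verified Lean document; each statement's English description precedes it below -/
import Mathlib

section
/- Let $0 < \alpha < 1$ and let $b \ge 2$ be an integer. Then the total coalescent rate of the Beta$(2-\alpha,\alpha)$-coalescent when there are $b$ lineages satisfies $\lambda_b = \sum_{k=2}^{b} \binom{b}{k} \lambda_{b,k}(\alpha) \le (b-1)\left(\frac{b}{2}\right)^{\alpha-1}$. -/
/-- The Beta function `B(x,y) = Γ(x)Γ(y)/Γ(x+y)`. -/
noncomputable def betaFn (x y : ℝ) : ℝ := Real.Gamma x * Real.Gamma y / Real.Gamma (x + y)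

/-- The Beta`(2-α,α)`-coalescent merger rate `λ_{b,k}(α) = B(k-α, α+b-k)/B(2-α,α)`. -/
noncomputable def betaCoalRate (α : ℝ) (b k : ℕ) : ℝ :=
  betaFn ((k : ℝ) - α) (α + (b : ℝ) - (k : ℝ)) / betaFn (2 - α) α

/-- Bernoulli-type key inequality for the induction step. -/
lemma key_ineq (α x : ℝ) (hα1 : 0 < α) (hα2 : α < 1) (hx : 2 ≤ x) :
    (x - 1 + α) * (x / 2) ^ (α - 1) ≤ x * ((x + 1) / 2) ^ (α - 1) := by
  have hx0 : (0:ℝ) < x := by linarith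
  have hx1 : (0:ℝ) < x + 1 := by linarith
  set u : ℝ := ((x + 1) / x) ^ (1 - α) with hu
  set v : ℝ := ((x + 1) / 2) ^ (α - 1) with hv
  have hv0 : 0 < v := Real.rpow_pos_of_pos (by positivity) _
  have hu0 : 0 < u := Real.rpow_pos_of_pos (by positivity) _
  have hu1 : 1 ≤ u := Real.one_le_rpow (by rw [le_div_iff₀ hx0]; linarith) (by linarith)
  -- Bernoulli
  have hbern : u ≤ 1 + (1 - α) * (1 / x) := by
    have h := rpow_one_add_le_one_add_mul_self (s := 1 / x)
      (le_trans (by norm_num : (-1:ℝ) ≤ 0) (by positivity : (0:ℝ) ≤ 1 / x)) (by linarith : (0:ℝ) ≤ 1 - α) (by linarith : 1 - α ≤ 1)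
    have he : (1 : ℝ) + 1 / x = (x + 1) / x := by field_simp
    rw [hu, ← he]
    exact h
  have hb2 : x * u ≤ x + (1 - α) := by
    have h1 := mul_le_mul_of_nonneg_left hbern hx0.le
    have he : x * (1 + (1 - α) * (1 / x)) = x + (1 - α) := by field_simp; try ring
    linarith
  have h2 : (x - 1 + α) * u ≤ x := by nlinarith [hb2, hu1]
  -- split (x/2)^(α-1) = v * u
  have hmain : (x / 2) ^ (α - 1) = v * u := by
    have e1 : u = (x / (x + 1)) ^ (α - 1) := by
      rw [hu, show (1 - α) = -(α - 1) by ring, Real.rpow_neg (by positivity),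
        ← Real.inv_rpow (by positivity), inv_div]
    rw [e1, hv, ← Real.mul_rpow (by positivity) (by positivity)]
    congr 1
    field_simp
    try ring
  rw [hmain]
  calc (x - 1 + α) * (v * u) = v * ((x - 1 + α) * u) := by ring
    _ ≤ v * x := mul_le_mul_of_nonneg_left h2 hv0.le
    _ = x * v := by ring

/-- Closed form for the Gamma-sum. -/
lemma gamma_sum_eq (α : ℝ) (hα1 : 0 < α) (hα2 : α < 1) (b : ℕ) (hb : 2 ≤ b) :
    ∑ k ∈ Finset.Icc 2 b, (b.choose k : ℝ) *
        (Real.Gamma ((k : ℝ) - α) * Real.Gamma (α + (b : ℝ) - (k : ℝ)))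
      = ((b : ℝ) - 1) / α * (Real.Gamma (2 - α) * Real.Gamma ((b : ℝ) - 1 + α)) := by
  induction b, hb using Nat.le_induction with
  | base =>
    rw [Finset.Icc_self, Finset.sum_singleton]
    have e1 : α + ((2:ℕ) : ℝ) - ((2:ℕ):ℝ) = α := by push_cast; ring
    have e2 : ((2:ℕ):ℝ) - 1 + α = α + 1 := by push_cast; ring
    have e3 : (((2:ℕ)):ℝ) - α = 2 - α := by push_cast; ring
    rw [e1, e2, e3, Real.Gamma_add_one hα1.ne']
    simp
    field_simp
    try ring
  | succ b hb ih =>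
    have hb1 : (1:ℝ) ≤ (b:ℝ) := by exact_mod_cast Nat.one_le_of_lt hb
    have hb2 : (2:ℝ) ≤ (b:ℝ) := by exact_mod_cast hb
    -- reindex k = j+1
    have hmap : Finset.Icc 2 (b+1) = (Finset.Icc 1 b).map (addRightEmbedding 1) := by
      rw [Finset.map_add_right_Icc]
    rw [hmap, Finset.sum_map]
    simp only [addRightEmbedding_apply]
    -- rewrite each term
    have hterm : ∀ j ∈ Finset.Icc 1 b,
        (((b+1).choose (j+1) : ℝ) *
          (Real.Gamma (((j+1:ℕ) : ℝ) - α) * Real.Gamma (α + ((b+1:ℕ) : ℝ) - ((j+1:ℕ) : ℝ))))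
        = (b.choose j : ℝ) * (((j:ℝ) - α) * (Real.Gamma ((j:ℝ) - α) * Real.Gamma (α + (b:ℝ) - j)))
          + (b.choose (j+1) : ℝ) *
            (((j:ℝ) - α) * (Real.Gamma ((j:ℝ) - α) * Real.Gamma (α + (b:ℝ) - j))) := by
      intro j hj
      rw [Finset.mem_Icc] at hj
      have hj1 : (1:ℝ) ≤ (j:ℝ) := by exact_mod_cast hj.1
      rw [Nat.choose_succ_succ]
      have ec1 : ((j+1 : ℕ) : ℝ) - α = ((j:ℝ) - α) + 1 := by push_cast; ring
      have ec2 : α + ((b+1 : ℕ) : ℝ) - ((j+1 : ℕ) : ℝ) = α + (b:ℝ) - j := by push_cast; ring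
      rw [ec1, ec2, Real.Gamma_add_one (by nlinarith : (j:ℝ) - α ≠ 0)]
      push_cast
      ring
    rw [Finset.sum_congr rfl hterm, Finset.sum_add_distrib]
    -- first sum: peel off j = 1
    have hins : Finset.Icc 1 b = insert 1 (Finset.Icc 2 b) := by
      ext x; simp only [Finset.mem_Icc, Finset.mem_insert]; omega
    have hnotmem : (1:ℕ) ∉ Finset.Icc 2 b := by simp
    have hsum1 : ∑ j ∈ Finset.Icc 1 b, (b.choose j : ℝ) *
        (((j:ℝ) - α) * (Real.Gamma ((j:ℝ) - α) * Real.Gamma (α + (b:ℝ) - j)))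
        = (b:ℝ) * (Real.Gamma (2 - α) * Real.Gamma ((b:ℝ) - 1 + α))
          + ∑ j ∈ Finset.Icc 2 b, (b.choose j : ℝ) *
            (((j:ℝ) - α) * (Real.Gamma ((j:ℝ) - α) * Real.Gamma (α + (b:ℝ) - j))) := by
      rw [hins, Finset.sum_insert hnotmem]
      congr 1
      have e1 : ((1:ℕ):ℝ) - α = 1 - α := by push_cast; ring
      have e2 : α + (b:ℝ) - ((1:ℕ):ℝ) = (b:ℝ) - 1 + α := by push_cast; ring
      rw [e1, e2, Nat.choose_one_right]
      have e3 : Real.Gamma (2 - α) = (1 - α) * Real.Gamma (1 - α) := by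
        rw [show (2:ℝ) - α = (1 - α) + 1 by ring,
          Real.Gamma_add_one (by linarith : (1:ℝ) - α ≠ 0)]
      rw [e3]
      ring
    rw [hsum1]
    -- second sum: reindex back and apply Gamma recurrences
    have hsum2 : ∑ j ∈ Finset.Icc 1 b, (b.choose (j+1) : ℝ) *
        (((j:ℝ) - α) * (Real.Gamma ((j:ℝ) - α) * Real.Gamma (α + (b:ℝ) - j)))
        = ∑ k ∈ Finset.Icc 2 b, (b.choose k : ℝ) *
          ((α + (b:ℝ) - k) * (Real.Gamma ((k:ℝ) - α) * Real.Gamma (α + (b:ℝ) - k))) := by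
      have hstep : ∑ j ∈ Finset.Icc 1 b, (b.choose (j+1) : ℝ) *
          (((j:ℝ) - α) * (Real.Gamma ((j:ℝ) - α) * Real.Gamma (α + (b:ℝ) - j)))
          = ∑ k ∈ Finset.Icc 2 (b+1), (b.choose k : ℝ) *
            (((k:ℝ) - 1 - α) * (Real.Gamma ((k:ℝ) - 1 - α) *
              Real.Gamma (α + (b:ℝ) - ((k:ℝ) - 1)))) := by
        rw [hmap, Finset.sum_map]
        simp only [addRightEmbedding_apply]
        apply Finset.sum_congr rfl
        intro j _
        have a1 : ((j+1:ℕ):ℝ) - 1 - α = (j:ℝ) - α := by push_cast; ring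
        have a2 : α + (b:ℝ) - (((j+1:ℕ):ℝ) - 1) = α + (b:ℝ) - j := by push_cast; ring
        rw [a1, a2]
      rw [hstep, Finset.sum_Icc_succ_top (by omega : 2 ≤ b + 1)]
      rw [Nat.choose_succ_self, Nat.cast_zero, zero_mul, add_zero]
      apply Finset.sum_congr rfl
      intro k hk
      rw [Finset.mem_Icc] at hk
      have hk2 : (2:ℝ) ≤ (k:ℝ) := by exact_mod_cast hk.1
      have hkb : (k:ℝ) ≤ (b:ℝ) := by exact_mod_cast hk.2
      have e1 : Real.Gamma ((k:ℝ) - α) = ((k:ℝ) - 1 - α) * Real.Gamma ((k:ℝ) - 1 - α) := by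
        rw [show (k:ℝ) - α = ((k:ℝ) - 1 - α) + 1 by ring,
          Real.Gamma_add_one (by nlinarith : (k:ℝ) - 1 - α ≠ 0)]
      have e2 : Real.Gamma (α + (b:ℝ) - ((k:ℝ) - 1))
          = (α + (b:ℝ) - k) * Real.Gamma (α + (b:ℝ) - k) := by
        rw [show α + (b:ℝ) - ((k:ℝ) - 1) = (α + (b:ℝ) - k) + 1 by ring,
          Real.Gamma_add_one (by nlinarith : α + (b:ℝ) - (k:ℝ) ≠ 0)]
      rw [e1, e2]
      ring
    rw [hsum2]
    -- combine the two Icc 2 b sums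
    have hcomb : ∑ j ∈ Finset.Icc 2 b, (b.choose j : ℝ) *
          (((j:ℝ) - α) * (Real.Gamma ((j:ℝ) - α) * Real.Gamma (α + (b:ℝ) - j)))
        + ∑ k ∈ Finset.Icc 2 b, (b.choose k : ℝ) *
          ((α + (b:ℝ) - k) * (Real.Gamma ((k:ℝ) - α) * Real.Gamma (α + (b:ℝ) - k)))
        = (b:ℝ) * ∑ k ∈ Finset.Icc 2 b, (b.choose k : ℝ) *
            (Real.Gamma ((k:ℝ) - α) * Real.Gamma (α + (b:ℝ) - k)) := by
      rw [Finset.mul_sum, ← Finset.sum_add_distrib]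
      apply Finset.sum_congr rfl
      intro k _
      ring
    rw [add_assoc, hcomb, ih]
    -- final algebra
    have hG : Real.Gamma (((b:ℕ)+1 : ℕ) - 1 + α) = ((b:ℝ) - 1 + α) * Real.Gamma ((b:ℝ) - 1 + α) := by
      push_cast
      rw [show (b:ℝ) + 1 - 1 + α = ((b:ℝ) - 1 + α) + 1 by ring,
        Real.Gamma_add_one (by nlinarith : (b:ℝ) - 1 + α ≠ 0)]
    rw [hG]
    push_cast
    field_simp
    try ring

/-- For `0 < α < 1` and `b ≥ 2`, the total coalescent rate of the Beta`(2-α,α)`-coalescent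
satisfies `λ_b = ∑_{k=2}^b C(b,k) λ_{b,k}(α) ≤ (b-1) (b/2)^(α-1)`. -/
theorem total_coal_rate_upper_bound_alpha_lt_one (α : ℝ) (hα1 : 0 < α) (hα2 : α < 1)
    (b : ℕ) (hb : 2 ≤ b) :
    ∑ k ∈ Finset.Icc 2 b, (b.choose k : ℝ) * betaCoalRate α b k ≤
      ((b : ℝ) - 1) * ((b : ℝ) / 2) ^ (α - 1) := by
  have hb2 : (2:ℝ) ≤ (b:ℝ) := by exact_mod_cast hb
  have hGb : 0 < Real.Gamma (b:ℝ) := Real.Gamma_pos_of_pos (by linarith)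
  have hGα : 0 < Real.Gamma α := Real.Gamma_pos_of_pos hα1
  have hG2α : 0 < Real.Gamma (2 - α) := Real.Gamma_pos_of_pos (by linarith)
  have hGbα : 0 < Real.Gamma ((b:ℝ) - 1 + α) := Real.Gamma_pos_of_pos (by linarith)
  -- rewrite the sum using the closed form
  have hrw : ∀ k ∈ Finset.Icc 2 b, (b.choose k : ℝ) * betaCoalRate α b k
      = ((b.choose k : ℝ) * (Real.Gamma ((k:ℝ) - α) * Real.Gamma (α + (b:ℝ) - k)))
        * (1 / (Real.Gamma (b:ℝ) * (Real.Gamma (2 - α) * Real.Gamma α))) := by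
    intro k hk
    unfold betaCoalRate betaFn
    have e1 : (k:ℝ) - α + (α + (b:ℝ) - k) = (b:ℝ) := by ring
    have e2 : (2:ℝ) - α + α = 2 := by ring
    rw [e1, e2, Real.Gamma_two]
    field_simp
    try ring
  rw [Finset.sum_congr rfl hrw, ← Finset.sum_mul, gamma_sum_eq α hα1 hα2 b hb]
  have hclosed : ((b:ℝ) - 1) / α * (Real.Gamma (2 - α) * Real.Gamma ((b:ℝ) - 1 + α))
      * (1 / (Real.Gamma (b:ℝ) * (Real.Gamma (2 - α) * Real.Gamma α)))
      = ((b:ℝ) - 1) * Real.Gamma ((b:ℝ) - 1 + α) / (Real.Gamma (b:ℝ) * (α * Real.Gamma α)) := by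
    field_simp
    try ring
  rw [hclosed]
  -- core inequality by induction: Γ(b-1+α) ≤ Γ(b) * (α*Γ(α)) * (b/2)^(α-1)
  have hcore : ∀ n : ℕ, 2 ≤ n → Real.Gamma ((n:ℝ) - 1 + α)
      ≤ Real.Gamma (n:ℝ) * (α * Real.Gamma α) * ((n:ℝ) / 2) ^ (α - 1) := by
    intro n hn
    induction n, hn using Nat.le_induction with
    | base =>
      have e1 : ((2:ℕ):ℝ) - 1 + α = α + 1 := by push_cast; ring
      have e2 : ((2:ℕ):ℝ) = (2:ℝ) := by push_cast; ring
      rw [e1, e2, Real.Gamma_two, Real.Gamma_add_one hα1.ne']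
      norm_num
    | succ n hn ihn =>
      have hn2 : (2:ℝ) ≤ (n:ℝ) := by exact_mod_cast hn
      have hGn : 0 < Real.Gamma (n:ℝ) := Real.Gamma_pos_of_pos (by linarith)
      have e1 : ((n+1 : ℕ):ℝ) - 1 + α = ((n:ℝ) - 1 + α) + 1 := by push_cast; ring
      have e2 : ((n+1 : ℕ):ℝ) = (n:ℝ) + 1 := by push_cast; ring
      rw [e1, e2, Real.Gamma_add_one (by nlinarith : (n:ℝ) - 1 + α ≠ 0),
        Real.Gamma_add_one (by positivity : (n:ℝ) ≠ 0)]
      have step1 : ((n:ℝ) - 1 + α) * Real.Gamma ((n:ℝ) - 1 + α)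
          ≤ ((n:ℝ) - 1 + α) * (Real.Gamma (n:ℝ) * (α * Real.Gamma α) * ((n:ℝ) / 2) ^ (α - 1)) :=
        mul_le_mul_of_nonneg_left ihn (by linarith)
      have step2 : ((n:ℝ) - 1 + α) * (((n:ℝ)) / 2) ^ (α - 1)
          ≤ (n:ℝ) * (((n:ℝ) + 1) / 2) ^ (α - 1) := key_ineq α (n:ℝ) hα1 hα2 hn2
      have hpos : (0:ℝ) ≤ Real.Gamma (n:ℝ) * (α * Real.Gamma α) := by positivity
      calc ((n:ℝ) - 1 + α) * Real.Gamma ((n:ℝ) - 1 + α)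
          ≤ ((n:ℝ) - 1 + α) * (Real.Gamma (n:ℝ) * (α * Real.Gamma α) * ((n:ℝ) / 2) ^ (α - 1)) :=
            step1
        _ = (Real.Gamma (n:ℝ) * (α * Real.Gamma α))
              * (((n:ℝ) - 1 + α) * ((n:ℝ) / 2) ^ (α - 1)) := by ring
        _ ≤ (Real.Gamma (n:ℝ) * (α * Real.Gamma α))
              * ((n:ℝ) * (((n:ℝ) + 1) / 2) ^ (α - 1)) :=
            mul_le_mul_of_nonneg_left step2 hpos
        _ = (n:ℝ) * Real.Gamma (n:ℝ) * (α * Real.Gamma α) * (((n:ℝ) + 1) / 2) ^ (α - 1) := by ring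
  rw [div_le_iff₀ (by positivity : (0:ℝ) < Real.Gamma (b:ℝ) * (α * Real.Gamma α))]
  calc ((b:ℝ) - 1) * Real.Gamma ((b:ℝ) - 1 + α)
      ≤ ((b:ℝ) - 1) * (Real.Gamma (b:ℝ) * (α * Real.Gamma α) * ((b:ℝ) / 2) ^ (α - 1)) :=
        mul_le_mul_of_nonneg_left (hcore b hb) (by linarith)
    _ = ((b:ℝ) - 1) * ((b:ℝ) / 2) ^ (α - 1) * (Real.Gamma (b:ℝ) * (α * Real.Gamma α)) := by ring
end

section
/- (Wendel's inequality) For all real $x > 0$ and $0 < s < 1$, $x^{1-s} \le \frac{\Gamma(x+1)}{\Gamma(x+s)} \le (x+s)^{1-s}$. -/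
open Real

/-- Wendel's inequality: for `x > 0` and `0 < s < 1`,
`x^(1-s) ≤ Γ(x+1)/Γ(x+s) ≤ (x+s)^(1-s)`. -/
theorem wendel_inequality (x s : ℝ) (hx : 0 < x) (hs0 : 0 < s) (hs1 : s < 1) :
    x ^ (1 - s) ≤ Real.Gamma (x + 1) / Real.Gamma (x + s) ∧
      Real.Gamma (x + 1) / Real.Gamma (x + s) ≤ (x + s) ^ (1 - s) := by
  have h1s : (0:ℝ) < 1 - s := by linarith
  have hx1 : (0:ℝ) < x + 1 := by linarith
  have hxs : (0:ℝ) < x + s := by linarith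
  have hGx : 0 < Real.Gamma x := Real.Gamma_pos_of_pos hx
  have hGx1 : 0 < Real.Gamma (x + 1) := Real.Gamma_pos_of_pos hx1
  have hGxs : 0 < Real.Gamma (x + s) := Real.Gamma_pos_of_pos hxs
  constructor
  · -- Γ(x+s) ≤ Γ(x)^(1-s) Γ(x+1)^s
    have h := Real.Gamma_mul_add_mul_le_rpow_Gamma_mul_rpow_Gamma hx hx1 h1s hs0
      (by ring)
    have heq : (1 - s) * x + s * (x + 1) = x + s := by ring
    rw [heq] at h
    have hadd : Real.Gamma (x + 1) = x * Real.Gamma x := Real.Gamma_add_one hx.ne'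
    rw [le_div_iff₀ hGxs]
    calc x ^ (1 - s) * Real.Gamma (x + s)
        ≤ x ^ (1 - s) * (Real.Gamma x ^ (1 - s) * Real.Gamma (x + 1) ^ s) := by
          apply mul_le_mul_of_nonneg_left h (rpow_nonneg hx.le _)
      _ = Real.Gamma (x + 1) := by
          rw [hadd, mul_rpow hx.le hGx.le,
            show x ^ (1 - s) * (Real.Gamma x ^ (1 - s) * (x ^ s * Real.Gamma x ^ s)) =
              (x ^ (1 - s) * x ^ s) * (Real.Gamma x ^ (1 - s) * Real.Gamma x ^ s) by ring,
            ← Real.rpow_add hx, ← Real.rpow_add hGx]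
          norm_num
  · -- Γ(x+1) ≤ Γ(x+s)^s Γ(x+s+1)^(1-s)
    have h := Real.Gamma_mul_add_mul_le_rpow_Gamma_mul_rpow_Gamma hxs (by linarith : (0:ℝ) < x + s + 1) hs0 h1s (by ring)
    have heq : s * (x + s) + (1 - s) * (x + s + 1) = x + 1 := by ring
    rw [heq] at h
    have hadd : Real.Gamma (x + s + 1) = (x + s) * Real.Gamma (x + s) :=
      Real.Gamma_add_one hxs.ne'
    rw [div_le_iff₀ hGxs]
    calc Real.Gamma (x + 1) ≤ Real.Gamma (x + s) ^ s * Real.Gamma (x + s + 1) ^ (1 - s) := h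
      _ = (x + s) ^ (1 - s) * Real.Gamma (x + s) := by
          rw [hadd, mul_rpow hxs.le hGxs.le, ← mul_assoc, mul_comm (Real.Gamma (x+s) ^ s),
            mul_assoc, ← Real.rpow_add hGxs]
          norm_num
end
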